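/- arXiv:2603.28743 — 3 statements merged into one kernel-verified Lean document; each statement's English description precedes it below -/
import Mathlib

section
/- Let V be a real inner product space and let w, δ ∈ V with w ≠ 0 and ‖δ‖ ≤ ‖w‖/2. Then |‖w + δ‖ − ‖w‖ − ⟨w, δ⟩/‖w‖| ≤ 2‖δ‖²/‖w‖. -/
/-! Write `p = ⟪w, δ⟫ / ‖w‖` for the component of `δ` along `w`. Then
`‖w + δ‖² = (‖w‖ + p)² + (‖δ‖² - p²)` with `0 ≤ ‖δ‖² - p² ≤ ‖δ‖²`, so `‖w + δ‖` exceeds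
`‖w‖ + p` by at most `‖δ‖² / (‖w‖ + p)`, and `‖w‖ + p ≥ ‖w‖ - ‖δ‖ ≥ ‖w‖ / 2`. -/

open RealInnerProductSpace

theorem abs_sub_le_div_of_sq_le_sq_add {a b e : ℝ} (ha : 0 ≤ a) (hb : 0 < b)
    (hba : b ^ 2 ≤ a ^ 2) (hab : a ^ 2 ≤ b ^ 2 + e) : |a - b| ≤ e / b := by
  have hle : b ≤ a := (pow_le_pow_iff_left₀ hb.le ha two_ne_zero).mp hba
  rw [abs_of_nonneg (sub_nonneg.mpr hle), le_div_iff₀ hb]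
  nlinarith

section InnerProductSpace

variable {V : Type*} [NormedAddCommGroup V] [InnerProductSpace ℝ V]

theorem abs_real_inner_div_norm_le (w δ : V) : |⟪w, δ⟫ / ‖w‖| ≤ ‖δ‖ := by
  rcases (norm_nonneg w).eq_or_lt with hw | hw
  · simp [← hw]
  · rw [abs_div, abs_norm, div_le_iff₀ hw, mul_comm]
    exact abs_real_inner_le_norm w δ

theorem norm_add_sq_eq_sq_add_inner_div_norm {w : V} (hw : w ≠ 0) (δ : V) :
    ‖w + δ‖ ^ 2 = (‖w‖ + ⟪w, δ⟫ / ‖w‖) ^ 2 + (‖δ‖ ^ 2 - (⟪w, δ⟫ / ‖w‖) ^ 2) := by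
  rw [norm_add_sq_real]
  field_simp [norm_ne_zero_iff.mpr hw]
  ring

end InnerProductSpace

/-- Let V be a real inner product space and let w, δ ∈ V with w ≠ 0 and
‖δ‖ ≤ ‖w‖/2. Then |‖w + δ‖ − ‖w‖ − ⟨w, δ⟩/‖w‖| ≤ 2‖δ‖²/‖w‖. -/
theorem norm_add_first_order_expansion
    {V : Type*} [NormedAddCommGroup V] [InnerProductSpace ℝ V]
    (w δ : V) (hw : w ≠ 0) (hδ : ‖δ‖ ≤ ‖w‖ / 2) :
    |‖w + δ‖ - ‖w‖ - (inner ℝ w δ : ℝ) / ‖w‖| ≤ 2 * ‖δ‖ ^ 2 / ‖w‖ := by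
  set p := ⟪w, δ⟫ / ‖w‖
  have hnw : 0 < ‖w‖ := norm_pos_iff.mpr hw
  have hp : |p| ≤ ‖δ‖ := abs_real_inner_div_norm_le w δ
  have hb : ‖w‖ / 2 ≤ ‖w‖ + p := by linarith [neg_abs_le p]
  have hexp := norm_add_sq_eq_sq_add_inner_div_norm hw δ
  have hp_sq : p ^ 2 ≤ ‖δ‖ ^ 2 := sq_le_sq' (abs_le.mp hp).1 (abs_le.mp hp).2
  have key : |‖w + δ‖ - (‖w‖ + p)| ≤ ‖δ‖ ^ 2 / (‖w‖ + p) :=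
    abs_sub_le_div_of_sq_le_sq_add (norm_nonneg _) (by linarith) (by linarith)
      (by linarith [sq_nonneg p])
  calc |‖w + δ‖ - ‖w‖ - p| = |‖w + δ‖ - (‖w‖ + p)| := by rw [sub_sub]
    _ ≤ ‖δ‖ ^ 2 / (‖w‖ + p) := key
    _ ≤ ‖δ‖ ^ 2 / (‖w‖ / 2) := by gcongr
    _ = 2 * ‖δ‖ ^ 2 / ‖w‖ := by field_simp
end

section
/- Let V be a real inner product space, W ∈ V with ‖W‖ = c_W > 0, and fix G ∈ V and λ ∈ ℝ. For η > 0 define the weight-decayed, renormalized update W⁺(η) = c_W · (W − η·G − η·λ·W)/‖W − η·G − η·λ·W‖. Then there exist constants C > 0 and ε > 0 such that for all 0 < η ≤ ε, ‖W⁺(η) − W + η·Π_T(G)‖ ≤ C·η², where Π_T is the tangent-space projection at W. (Weight decay is a first-order no-op under Frobenius renormalization.) -/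
/-!
The renormalized step `η ↦ W⁺(η)` is a smooth curve with `W⁺(0) = W`. Differentiating the
normalization `v ↦ c • v / ‖v‖` shows that its velocity at `0` is the tangent projection at `W`
of the velocity `-(G + λ W)` of the unnormalized step; the weight-decay part `-λ W` is radial and
is annihilated by `Π_T`, so the velocity is `-Π_T G`. The first-order Taylor expansion of a
`C²` curve then has an `O(η²)` remainder.
-/

open Asymptotics Filter Topology
open scoped RealInnerProductSpace

theorem ContDiffAt.isBigO_sub_sub_smul_deriv {E : Type*} [NormedAddCommGroup E]
    [NormedSpace ℝ E] {f : ℝ → E} {x₀ : ℝ} (hf : ContDiffAt ℝ 2 f x₀) :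
    (fun x => f x - f x₀ - (x - x₀) • deriv f x₀) =O[𝓝 x₀] fun x => (x - x₀) ^ 2 := by
  obtain ⟨C, hC₀, hC⟩ :=
    ((hf.derivWithin (m := 1) (by norm_num)).differentiableAt one_ne_zero).isBigO_sub.exists_nonneg
  have hdiff : ∀ᶠ x in 𝓝 x₀, DifferentiableAt ℝ f x :=
    (hf.eventually (by simp)).mono fun x hx => hx.differentiableAt (by norm_num)
  obtain ⟨δ, hδ, hball⟩ := Metric.eventually_nhds_iff_ball.1 (hC.bound.and hdiff)
  refine IsBigO.of_bound C (Metric.eventually_nhds_iff_ball.2 ⟨δ, hδ, fun x hx => ?_⟩)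
  have hsub : segment ℝ x₀ x ⊆ Metric.ball x₀ δ :=
    (convex_ball x₀ δ).segment_subset (Metric.mem_ball_self hδ) hx
  -- mean value theorem for `y ↦ f y - y • f'(x₀)`, whose derivative is `O(y - x₀)`
  have hmvt := (convex_segment x₀ x).norm_image_sub_le_of_norm_hasDerivWithin_le
    (f := fun y => f y - y • deriv f x₀) (f' := fun y => deriv f y - deriv f x₀)
    (fun y hy => (((hball y (hsub hy)).2.hasDerivAt).sub
      ((hasDerivAt_id y).smul_const (deriv f x₀))).hasDerivWithinAt.congr_deriv (by simp))
    (fun y hy => (hball y (hsub hy)).1.trans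
      (mul_le_mul_of_nonneg_left (norm_sub_le_of_mem_segment hy) hC₀))
    (left_mem_segment ℝ x₀ x) (right_mem_segment ℝ x₀ x)
  calc _ = ‖(f x - x • deriv f x₀) - (f x₀ - x₀ • deriv f x₀)‖ := by congr 1; module
    _ ≤ C * ‖x - x₀‖ * ‖x - x₀‖ := hmvt
    _ = C * ‖(x - x₀) ^ 2‖ := by rw [norm_pow]; ring

section InnerProductSpace

variable {V : Type*} [NormedAddCommGroup V] [InnerProductSpace ℝ V]

theorem Submodule.starProjection_orthogonal_singleton (W Δ : V) :
    (ℝ ∙ W)ᗮ.starProjection Δ = Δ - (⟪Δ, W⟫ / ‖W‖ ^ 2) • W := by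
  rw [starProjection_orthogonal_val, starProjection_singleton, real_inner_comm]
  rfl

theorem HasDerivAt.norm {u : ℝ → V} {u' : V} {t : ℝ} (hu : HasDerivAt u u' t)
    (h0 : u t ≠ 0) : HasDerivAt (fun s => ‖u s‖) (⟪u t, u'⟫ / ‖u t‖) t := by
  have h := hu.norm_sq.sqrt (by positivity)
  simp only [Real.sqrt_sq (norm_nonneg _)] at h
  convert h using 1
  field_simp

theorem HasDerivAt.const_div_norm_smul {u : ℝ → V} {u' : V} {t : ℝ} (c : ℝ)
    (hu : HasDerivAt u u' t) (h0 : u t ≠ 0) :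
    HasDerivAt (fun s => (c / ‖u s‖) • u s) ((c / ‖u t‖) • (ℝ ∙ u t)ᗮ.starProjection u') t := by
  have hn : ‖u t‖ ≠ 0 := norm_ne_zero_iff.2 h0
  convert ((hasDerivAt_const t c).fun_div (hu.norm h0) hn).fun_smul hu using 1
  rw [Submodule.starProjection_orthogonal_singleton, real_inner_comm]
  match_scalars <;> field_simp
  ring

end InnerProductSpace

/-- Let V be a real inner product space, W ∈ V with ‖W‖ = c_W > 0, and fix
G ∈ V, λ ∈ ℝ.  For η > 0 define W⁺(η) = c_W·(W − η·G − η·λ·W)/‖W − η·G − η·λ·W‖.  Then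
there exist C > 0 and ε > 0 such that for all 0 < η ≤ ε,
‖W⁺(η) − W + η·Π_T(G)‖ ≤ C·η², where Π_T(Δ) = Δ − (⟨Δ, W⟩/‖W‖²)·W is the tangent-space
projection at W.  (Weight decay is a first-order no-op under Frobenius renormalization.) -/
theorem weight_decay_first_order_noop
    {V : Type*} [NormedAddCommGroup V] [InnerProductSpace ℝ V]
    (W : V) (cW : ℝ) (hcW : 0 < cW) (hW : ‖W‖ = cW) (G : V) (lam : ℝ) :
    ∃ C > (0 : ℝ), ∃ ε > (0 : ℝ), ∀ η : ℝ, 0 < η → η ≤ ε →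
      ‖(cW / ‖W - η • G - (η * lam) • W‖) • (W - η • G - (η * lam) • W) - W
          + η • (G - ((inner ℝ G W : ℝ) / ‖W‖ ^ 2) • W)‖
        ≤ C * η ^ 2 := by
  set u : ℝ → V := fun η => W - η • G - (η * lam) • W
  have hu0 : u 0 = W := by simp [u]
  have hW0 : u 0 ≠ 0 := hu0 ▸ norm_ne_zero_iff.1 (hW ▸ hcW.ne')
  have hunit : cW / ‖u 0‖ = 1 := by rw [hu0, hW, div_self hcW.ne']
  have hu : HasDerivAt u (-G - lam • W) 0 := by
    simpa using ((hasDerivAt_id (0 : ℝ)).smul_const G).const_sub W |>.fun_sub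
      (((hasDerivAt_id (0 : ℝ)).mul_const lam).smul_const W)
  have hderiv : HasDerivAt (fun η => (cW / ‖u η‖) • u η) (-(ℝ ∙ W)ᗮ.starProjection G) 0 := by
    convert hu.const_div_norm_smul cW hW0 using 1
    rw [hunit, one_smul, hu0, map_sub, map_neg, map_smul,
      Submodule.starProjection_orthogonalComplement_singleton_eq_zero, smul_zero, sub_zero]
  have hsmooth : ContDiffAt ℝ 2 (fun η => (cW / ‖u η‖) • u η) 0 := by
    have hu_smooth : ContDiff ℝ 2 u := by fun_prop
    exact (contDiffAt_const.div (hu_smooth.contDiffAt.norm ℝ hW0) (norm_ne_zero_iff.2 hW0)).smul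
      hu_smooth.contDiffAt
  obtain ⟨C, hC, hO⟩ := hsmooth.isBigO_sub_sub_smul_deriv.exists_pos
  obtain ⟨ε, hε, hball⟩ := Metric.eventually_nhds_iff.1 hO.bound
  refine ⟨C, hC, ε / 2, by positivity, fun η hη hηε => ?_⟩
  have := hball (show dist η 0 < ε by rw [Real.dist_0_eq_abs, abs_of_pos hη]; linarith)
  rwa [hderiv.deriv, hunit, one_smul, hu0, sub_zero, smul_neg, sub_neg_eq_add,
    Submodule.starProjection_orthogonal_singleton, norm_pow, Real.norm_eq_abs, sq_abs] at this
end

section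
/- Fix an integer d ≥ 1 and a real ε > 0. Let P = I − (1/d)·𝟙𝟙ᵀ on ℝ^d, and for u ∈ ℝ^d set v = Pu and σ = √(‖v‖₂²/d + ε). Then the LayerNorm Jacobian J_LN(u): h ↦ (1/σ)·Ph − (⟨v, h⟩/(d·σ³))·v has operator norm at most 1/σ, and hence at most 1/√ε, uniformly in u. (The LayerNorm Jacobian is O(1) in operator norm, which is the key step showing that post-norm residual blocks obey the same depth-scaling exponent as pre-norm blocks.) -/
open scoped BigOperators

/-- The mean-centering projection P = I − (1/d)·𝟙𝟙ᵀ on ℝ^d: (P u)_i = u_i − (1/d)Σ_j u_j. -/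
noncomputable def centerP (d : ℕ) (u : EuclideanSpace ℝ (Fin d)) :
    EuclideanSpace ℝ (Fin d) :=
  (WithLp.equiv 2 (Fin d → ℝ)).symm (fun i => u i - (∑ j, u j) / d)

/-- σ(u) = √(‖P u‖₂²/d + ε). -/
noncomputable def lnSigma (d : ℕ) (ε : ℝ) (u : EuclideanSpace ℝ (Fin d)) : ℝ :=
  Real.sqrt (‖centerP d u‖ ^ 2 / d + ε)

open scoped RealInnerProductSpace

/-!
Write `J h = σ⁻¹ • (w - (β * ⟪v, w⟫) • v)` with `w = P h`, `v = P u`, `β = 1 / (d σ²)`, using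
`⟪v, h⟫ = ⟪v, P h⟫`. The map `w ↦ w - β ⟪v, w⟫ v` is a contraction as soon as `0 ≤ β ‖v‖² ≤ 2`,
and here `β ‖v‖² = ‖v‖² / (‖v‖² + d ε) ≤ 1`. Since `P` is an orthogonal projection, `‖P h‖ ≤ ‖h‖`,
so `‖J‖ ≤ σ⁻¹`, and `σ ≥ √ε`.
-/

section InnerProductSpace

variable {E : Type*} [NormedAddCommGroup E] [InnerProductSpace ℝ E]

theorem norm_le_of_inner_self_eq_inner {p h : E} (hp : ⟪p, p⟫ = ⟪p, h⟫) : ‖p‖ ≤ ‖h‖ := by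
  have hsq : ‖p‖ * ‖p‖ ≤ ‖p‖ * ‖h‖ := by
    rw [← real_inner_self_eq_norm_mul_norm, hp]
    exact real_inner_le_norm p h
  rcases (norm_nonneg p).eq_or_lt with hp0 | hp0
  · rw [← hp0]
    exact norm_nonneg h
  · exact le_of_mul_le_mul_left hsq hp0

theorem norm_sub_smul_inner_smul_le {β : ℝ} (hβ : 0 ≤ β) (v w : E) (hv : β * ‖v‖ ^ 2 ≤ 2) :
    ‖w - (β * ⟪v, w⟫) • v‖ ≤ ‖w‖ := by
  have hsq : ‖w - (β * ⟪v, w⟫) • v‖ ^ 2 = ‖w‖ ^ 2 - β * ⟪v, w⟫ ^ 2 * (2 - β * ‖v‖ ^ 2) := by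
    rw [norm_sub_sq_real, inner_smul_right, norm_smul, mul_pow, Real.norm_eq_abs, sq_abs,
      real_inner_comm]
    ring
  have hcorrection : 0 ≤ β * ⟪v, w⟫ ^ 2 * (2 - β * ‖v‖ ^ 2) := by
    have : 0 ≤ 2 - β * ‖v‖ ^ 2 := by linarith
    positivity
  refine (sq_le_sq₀ (norm_nonneg _) (norm_nonneg _)).mp ?_
  linarith

end InnerProductSpace

section Centering

variable {d : ℕ}

theorem centerP_apply (u : EuclideanSpace ℝ (Fin d)) (i : Fin d) :
    centerP d u i = u i - (∑ j, u j) / d := rfl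

theorem sum_centerP_eq_zero (hd : 1 ≤ d) (u : EuclideanSpace ℝ (Fin d)) :
    ∑ i, centerP d u i = 0 := by
  have hd0 : (d : ℝ) ≠ 0 := by positivity
  simp only [centerP_apply, Finset.sum_sub_distrib, Finset.sum_const, Finset.card_univ,
    Fintype.card_fin, nsmul_eq_mul]
  field_simp
  ring

theorem inner_centerP_centerP (hd : 1 ≤ d) (u h : EuclideanSpace ℝ (Fin d)) :
    ⟪centerP d u, centerP d h⟫ = ⟪centerP d u, h⟫ := by
  simp only [PiLp.inner_apply, RCLike.inner_apply, conj_trivial, centerP_apply h, sub_mul,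
    Finset.sum_sub_distrib, ← Finset.mul_sum, sum_centerP_eq_zero hd u, mul_zero, sub_zero]

theorem norm_centerP_le (hd : 1 ≤ d) (h : EuclideanSpace ℝ (Fin d)) :
    ‖centerP d h‖ ≤ ‖h‖ :=
  norm_le_of_inner_self_eq_inner (inner_centerP_centerP hd h h)

end Centering

section Sigma

variable {d : ℕ} {ε : ℝ}

theorem lnSigma_nonneg (u : EuclideanSpace ℝ (Fin d)) : 0 ≤ lnSigma d ε u :=
  Real.sqrt_nonneg _

theorem sqrt_le_lnSigma (u : EuclideanSpace ℝ (Fin d)) : Real.sqrt ε ≤ lnSigma d ε u :=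
  Real.sqrt_le_sqrt (le_add_of_nonneg_left (by positivity))

theorem sq_norm_centerP_le_mul_sq_lnSigma (hd : 1 ≤ d) (hε : 0 ≤ ε)
    (u : EuclideanSpace ℝ (Fin d)) : ‖centerP d u‖ ^ 2 ≤ d * lnSigma d ε u ^ 2 := by
  have hd0 : (d : ℝ) ≠ 0 := by positivity
  rw [lnSigma, Real.sq_sqrt (by positivity), mul_add, mul_div_cancel₀ _ hd0]
  nlinarith

end Sigma

/-- Fix d ≥ 1 and ε > 0, let v = P u and σ = σ(u).  The LayerNorm
Jacobian J_LN(u) : h ↦ (1/σ)·P h − (⟨v, h⟩/(d·σ³))·v has operator norm at most 1/σ and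
hence at most 1/√ε, uniformly in u.  (The LayerNorm Jacobian is O(1) in operator
norm.) -/
theorem layerNorm_jacobian_opNorm_le (d : ℕ) (hd : 1 ≤ d) (ε : ℝ) (hε : 0 < ε)
    (u : EuclideanSpace ℝ (Fin d))
    (J : EuclideanSpace ℝ (Fin d) →L[ℝ] EuclideanSpace ℝ (Fin d))
    (hJ : ∀ h : EuclideanSpace ℝ (Fin d),
      J h = (lnSigma d ε u)⁻¹ • centerP d h
          - ((inner ℝ (centerP d u) h : ℝ) / (d * (lnSigma d ε u) ^ 3)) • centerP d u) :
    ‖J‖ ≤ (lnSigma d ε u)⁻¹ ∧ ‖J‖ ≤ (Real.sqrt ε)⁻¹ := by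
  set σ := lnSigma d ε u
  set v := centerP d u
  set β := (d * σ ^ 2)⁻¹
  have hβ : β * ‖v‖ ^ 2 ≤ 2 :=
    calc β * ‖v‖ ^ 2 ≤ 1 := inv_mul_le_one_of_le₀
            (sq_norm_centerP_le_mul_sq_lnSigma hd hε.le u) (by positivity)
      _ ≤ 2 := one_le_two
  have hσ_inv : 0 ≤ σ⁻¹ := inv_nonneg.mpr (lnSigma_nonneg u)
  have hJ' : ∀ h, J h = σ⁻¹ • (centerP d h - (β * ⟪v, centerP d h⟫) • v) := fun h => by
    rw [hJ h, inner_centerP_centerP hd u h, smul_sub, smul_smul]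
    congr 2
    ring
  have hσ : ‖J‖ ≤ σ⁻¹ := J.opNorm_le_bound hσ_inv fun h =>
    calc ‖J h‖ ≤ σ⁻¹ * ‖centerP d h‖ := by
          rw [hJ', norm_smul, Real.norm_of_nonneg hσ_inv]
          exact mul_le_mul_of_nonneg_left
            (norm_sub_smul_inner_smul_le (by positivity) v _ hβ) hσ_inv
      _ ≤ σ⁻¹ * ‖h‖ := mul_le_mul_of_nonneg_left (norm_centerP_le hd h) hσ_inv
  exact ⟨hσ, hσ.trans (inv_anti₀ (Real.sqrt_pos.mpr hε) (sqrt_le_lnSigma u))⟩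
end
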